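/- arXiv:2501.13476 — 2 statements merged into one kernel-verified Lean document; each statement's English description precedes it below -/
import Mathlib

section
/- Let Λ be a finite dimensional algebra over an algebraically closed field K, and let S be a finite semibrick in mod Λ. If a brick B ∈ S and an irreducible component Z ∈ Irr(Λ) satisfy that the closure of the orbit O_B is properly contained in Z, then there exists a brick B' such that S ⊔ {B'} is a semibrick and B' ∈ Z. -/
/-!
Common setup: representation schemes of a finite dimensional algebra `Λ = KQ/I`
(`Q` a finite quiver, `I` an admissible ideal), following the paper.
-/

namespace RepScheme

variable (K : Type) [Field K]
variable (Q0 Q1 : Type) [Fintype Q0] [Fintype Q1]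
variable (s t : Q1 → Q0)

/-- The Zariski topology on the affine space `σ → K`: generated by the complements of
hypersurfaces; its closed sets are exactly the common zero loci of sets of polynomials. -/
def zariskiTopology (σ : Type) : TopologicalSpace (σ → K) :=
  TopologicalSpace.generateFrom
    {U | ∃ p : MvPolynomial σ K, U = {x | MvPolynomial.eval x p ≠ 0}}

/-- The representation space `rep(Q,d)` of the quiver `Q` for the dimension vector `d`. -/
def Rep (d : Q0 → ℕ) : Type :=
  ∀ a : Q1, Matrix (Fin (d (t a))) (Fin (d (s a))) K

/-- `rep(Q,d)` carries the Zariski topology, transported from its affine coordinates. -/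
instance (d : Q0 → ℕ) : TopologicalSpace (Rep K Q0 Q1 s t d) :=
  TopologicalSpace.induced
    (fun M (x : Σ a : Q1, Fin (d (t a)) × Fin (d (s a))) => M x.1 x.2.1 x.2.2)
    (zariskiTopology K _)

/-- Paths in the quiver `Q`. -/
inductive QPath : Q0 → Q0 → Type where
  | nil (i : Q0) : QPath i i
  | cons {i j : Q0} (p : QPath i j) (a : Q1) (ha : s a = j) : QPath i (t a)

/-- The length of a path. -/
def QPath.length : ∀ {i j : Q0}, QPath Q0 Q1 s t i j → ℕ
  | _, _, .nil _ => 0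
  | _, _, .cons p _ _ => QPath.length p + 1

/-- Evaluation of a path in a point of `rep(Q,d)` (composition of the corresponding matrices). -/
def evalPath {d : Q0 → ℕ} (M : Rep K Q0 Q1 s t d) :
    ∀ {i j : Q0}, QPath Q0 Q1 s t i j → Matrix (Fin (d j)) (Fin (d i)) K
  | _, _, .nil _ => 1
  | _, _, .cons p a ha =>
      M a * (Matrix.reindex (finCongr (congrArg d ha)).symm (Equiv.refl _) (evalPath M p))

/-- Hom space `Hom_Λ(M, N)` between two representation points, as a `K`-subspace of the space
of tuples of matrices. -/
def RepHom {d c : Q0 → ℕ} (M : Rep K Q0 Q1 s t d) (N : Rep K Q0 Q1 s t c) :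
    Submodule K (∀ i : Q0, Matrix (Fin (c i)) (Fin (d i)) K) where
  carrier := {f | ∀ a : Q1, f (t a) * M a = N a * f (s a)}
  add_mem' := fun hf hg => by
    intro a
    simp only [Pi.add_apply, Matrix.add_mul, Matrix.mul_add]
    rw [hf a, hg a]
  zero_mem' := by intro a; simp
  smul_mem' := fun c f hf => by
    intro a
    simp only [Pi.smul_apply, Matrix.smul_mul, Matrix.mul_smul]
    rw [hf a]

/-- A representation point is a brick if its endomorphism ring is `K`,
i.e. one-dimensional over `K`. -/
def IsBrick {d : Q0 → ℕ} (M : Rep K Q0 Q1 s t d) : Prop :=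
  Module.finrank K (RepHom K Q0 Q1 s t M M) = 1

variable (rel : ∀ i j : Q0, Set (QPath Q0 Q1 s t i j →₀ K))

/-- A representation point satisfies the relations generating the admissible ideal `I`. -/
def SatisfiesRel {d : Q0 → ℕ} (M : Rep K Q0 Q1 s t d) : Prop :=
  ∀ (i j : Q0) (r : QPath Q0 Q1 s t i j →₀ K), r ∈ rel i j →
    ∑ p ∈ r.support, r p • evalPath K Q0 Q1 s t M p = 0

/-- The representation scheme `rep(Λ,d)` of `Λ = KQ/I` : the closed subscheme of `rep(Q,d)`
cut out by the relations generating `I`, with the (subspace) Zariski topology. -/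
def RepMod (d : Q0 → ℕ) : Type :=
  {M : Rep K Q0 Q1 s t d // SatisfiesRel K Q0 Q1 s t rel M}

instance (d : Q0 → ℕ) : TopologicalSpace (RepMod K Q0 Q1 s t rel d) :=
  inferInstanceAs (TopologicalSpace {M : Rep K Q0 Q1 s t d // SatisfiesRel K Q0 Q1 s t rel M})

/-- Admissibility of the ideal `I` generated by the chosen relations:
the relations lie in the square of the arrow ideal, and some power of the arrow ideal
is contained in `I` (an element of `KQ` lies in `I` iff it acts by zero on every
module satisfying the relations, i.e. on every point of every `rep(Λ,d)`). -/
structure IsAdmissible : Prop where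
  supported_in_radical_square :
    ∀ (i j : Q0), ∀ r ∈ rel i j, ∀ p ∈ r.support, 2 ≤ QPath.length Q0 Q1 s t p
  radical_nilpotent :
    ∃ n : ℕ, ∀ (d : Q0 → ℕ) (M : Rep K Q0 Q1 s t d), SatisfiesRel K Q0 Q1 s t rel M →
      ∀ (i j : Q0) (p : QPath Q0 Q1 s t i j), n ≤ QPath.length Q0 Q1 s t p →
        evalPath K Q0 Q1 s t M p = 0

/-- The orbit of a point of `rep(Λ,d)` under the action of `GL(d) = ∏ᵢ GL(dᵢ)`. -/
def orbit {d : Q0 → ℕ} (M : RepMod K Q0 Q1 s t rel d) : Set (RepMod K Q0 Q1 s t rel d) :=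
  {X | ∃ g : ∀ i : Q0, GL (Fin (d i)) K, ∀ a : Q1,
    X.1 a = (g (t a) : Matrix (Fin (d (t a))) (Fin (d (t a))) K) * M.1 a *
      (((g (s a))⁻¹ : GL (Fin (d (s a))) K) : Matrix (Fin (d (s a))) (Fin (d (s a))) K)}

/-- A finite dimensional `Λ`-module, regarded as a point of the representation scheme
`rep(Λ,d)` for its dimension vector `d`. -/
def ModPt : Type := Σ d : Q0 → ℕ, RepMod K Q0 Q1 s t rel d

/-- A set of modules (points of the representation schemes) is a semibrick if all its
elements are bricks and there are no nonzero homomorphisms between distinct elements. -/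
def IsSemibrick (S : Set (ModPt K Q0 Q1 s t rel)) : Prop :=
  (∀ B ∈ S, IsBrick K Q0 Q1 s t B.2.1) ∧
  ∀ B ∈ S, ∀ B' ∈ S, B ≠ B' → RepHom K Q0 Q1 s t B.2.1 B'.2.1 = ⊥

/-- `O` is an open subset of `Z` (in the subspace topology). -/
def IsOpenIn {X : Type} [TopologicalSpace X] (O Z : Set X) : Prop :=
  O ⊆ Z ∧ ∃ U : Set X, IsOpen U ∧ O = U ∩ Z

/-- `O` is an open dense subset of `Z` (in the subspace topology). -/
def IsOpenDenseIn {X : Type} [TopologicalSpace X] (O Z : Set X) : Prop :=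
  IsOpenIn O Z ∧ Z ⊆ closure O

/-- A brick is an open brick if its `GL(d)`-orbit is open dense in some irreducible
component of the representation scheme. -/
def IsOpenBrick (B : ModPt K Q0 Q1 s t rel) : Prop :=
  IsBrick K Q0 Q1 s t B.2.1 ∧
  ∃ Z ∈ irreducibleComponents (RepMod K Q0 Q1 s t rel B.1),
    IsOpenDenseIn (orbit K Q0 Q1 s t rel B.2) Z

/-- The set of modules lying in a given subset `Z` of `rep(Λ,δ)`. -/
def inComponent (δ : Q0 → ℕ) (Z : Set (RepMod K Q0 Q1 s t rel δ)) :
    Set (ModPt K Q0 Q1 s t rel) :=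
  {p | ∃ h : p.1 = δ, (h ▸ p.2) ∈ Z}

end RepScheme

/-!
`Hom(X, N)` and `Hom(N, X)` are kernels of matrices whose entries are polynomial in the
coordinates of `X`. Hence their dimensions are upper semicontinuous, and the loci where they
vanish, as well as the locus where `End(X)` is one-dimensional, are open. As `Z` is irreducible,
it suffices that each of these finitely many open sets meets `Z`: a common point is a brick
orthogonal to `S`, and it is not in `S` since its endomorphisms do not vanish. For `N ≠ B` the
point `B` itself lies in the open sets. For `N = B`, suppose `Hom(B, X) ≠ 0` on all of `Z`. As
`End(B) = K · id`, the signed maximal minors of suitable rows of the defining matrix give, near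
`B`, a homomorphism `B → X` depending polynomially on `X` and equal to a multiple of `id` at `B`.
It is invertible on a nonempty open subset of `Z`, which thus lies in the orbit of `B` and is
dense in `Z`, so `Z` would be the orbit closure of `B`.
-/

open Module Submodule

namespace Matrix

section Rank

variable {K : Type*} [Field K] {m n : Type*} [Fintype n]

theorem rank_add_finrank_ker (A : Matrix m n K) :
    A.rank + finrank K (LinearMap.ker A.mulVecLin) = Fintype.card n := by
  rw [rank, LinearMap.finrank_range_add_finrank_ker, finrank_fintype_fun_eq_card]

variable [Fintype m]

theorem exists_linearIndependent_submatrix_rows (A : Matrix m n K) {k : ℕ} (h : k ≤ A.rank) :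
    ∃ r : Fin k → m, LinearIndependent K (A.submatrix r id).row := by
  classical
  obtain ⟨κ, a, ha, hspan, hli⟩ := exists_linearIndependent' K A.row
  have : Fintype κ := Fintype.ofInjective a ha
  have hk : Fintype.card (Fin k) ≤ Fintype.card κ := by
    rw [Fintype.card_fin, ← finrank_span_eq_card hli, hspan, ← rank_eq_finrank_span_row]
    exact h
  obtain ⟨e⟩ := Function.Embedding.nonempty_of_card_le hk
  exact ⟨a ∘ e, hli.comp e e.injective⟩

theorem exists_submatrix_det_ne_zero (A : Matrix m n K) {k : ℕ} (h : k ≤ A.rank) :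
    ∃ (r : Fin k → m) (c : Fin k → n), (A.submatrix r c).det ≠ 0 := by
  obtain ⟨r, hr⟩ := A.exists_linearIndependent_submatrix_rows h
  have hrank : k ≤ (A.submatrix r id)ᵀ.rank := by
    rw [rank_transpose, hr.rank_matrix, Fintype.card_fin]
  obtain ⟨c, hc⟩ := (A.submatrix r id)ᵀ.exists_linearIndependent_submatrix_rows hrank
  refine ⟨r, c, fun h0 => ?_⟩
  have hunit : IsUnit (A.submatrix r c)ᵀ := linearIndependent_rows_iff_isUnit.mp hc
  rw [isUnit_iff_isUnit_det, det_transpose, h0] at hunit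
  exact not_isUnit_zero hunit

theorem le_rank_iff_exists_submatrix_det_ne_zero (A : Matrix m n K) {k : ℕ} :
    k ≤ A.rank ↔ ∃ (r : Fin k → m) (c : Fin k → n), (A.submatrix r c).det ≠ 0 := by
  refine ⟨A.exists_submatrix_det_ne_zero, fun ⟨r, c, h⟩ => ?_⟩
  simpa [rank_of_det_ne_zero h] using A.rank_submatrix_le r c

end Rank

section MaxMinors

variable {R S : Type*} [CommRing R] [CommRing S] {k : ℕ}

/-- The generalized cross product of the rows of `A`. -/
def maxMinors (A : Matrix (Fin k) (Fin (k + 1)) R) : Fin (k + 1) → R :=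
  fun j => (-1) ^ (j : ℕ) * (A.submatrix id j.succAbove).det

theorem mulVec_maxMinors (A : Matrix (Fin k) (Fin (k + 1)) R) : A *ᵥ A.maxMinors = 0 := by
  ext ρ
  -- expand along row `0` the determinant of `A` with its row `ρ` repeated on top
  have h := det_zero_of_row_eq (M := of (Fin.cons (A ρ) A)) (Fin.succ_ne_zero ρ).symm rfl
  rw [det_succ_row_zero] at h
  have hrow : of (Fin.cons (A ρ) A) 0 = A ρ := rfl
  have hsub (j : Fin (k + 1)) :
      (of (Fin.cons (A ρ) A)).submatrix Fin.succ j.succAbove = A.submatrix id j.succAbove := rfl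
  simp only [hrow, hsub] at h
  simpa [mulVec, dotProduct, maxMinors, mul_comm, mul_left_comm, mul_assoc] using h

theorem maxMinors_map (A : Matrix (Fin k) (Fin (k + 1)) R) (f : R →+* S) :
    (A.map f).maxMinors = f ∘ A.maxMinors := by
  ext j
  simp [maxMinors, RingHom.map_det, RingHom.mapMatrix_apply, submatrix_map]

theorem maxMinors_last (A : Matrix (Fin k) (Fin (k + 1)) R) :
    A.maxMinors (Fin.last k) = (-1) ^ k * (A.submatrix id Fin.castSucc).det := by
  simp [maxMinors]

theorem ker_mulVecLin_eq_span_maxMinors {K : Type*} [Field K]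
    (A : Matrix (Fin k) (Fin (k + 1)) K) (h : (A.submatrix id Fin.castSucc).det ≠ 0) :
    LinearMap.ker A.mulVecLin = K ∙ A.maxMinors := by
  have hrank : A.rank = k := le_antisymm (by simpa using A.rank_le_card_height)
    (by simpa [rank_of_det_ne_zero h] using A.rank_submatrix_le id Fin.castSucc)
  have hne : A.maxMinors ≠ 0 := fun h0 => by
    simpa [maxMinors_last, h] using congrFun h0 (Fin.last k)
  refine (eq_of_le_of_finrank_eq ((span_singleton_le_iff_mem _ _).mpr ?_) ?_).symm
  · exact A.mulVec_maxMinors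
  · have := A.rank_add_finrank_ker
    rw [finrank_span_singleton hne]
    simp only [Fintype.card_fin] at this
    omega

end MaxMinors

end Matrix

theorem Fin.exists_equiv_castSucc_eq {n : Type*} [Fintype n] {k : ℕ} {c : Fin k → n}
    (hc : Function.Injective c) (hn : Fintype.card n = k + 1) :
    ∃ e : Fin (k + 1) ≃ n, ∀ i, e i.castSucc = c i := by
  obtain ⟨x₀, hx₀⟩ : ∃ x₀, x₀ ∉ Set.range c := by
    by_contra! h
    have := Fintype.card_le_of_surjective c h
    simp only [Fintype.card_fin] at this
    omega
  have hbij : Function.Bijective (Fin.snoc c x₀ : Fin (k + 1) → n) :=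
    (Fintype.bijective_iff_injective_and_card _).mpr
      ⟨Fin.snoc_injective_of_injective hc hx₀, by simp [hn]⟩
  exact ⟨Equiv.ofBijective _ hbij, fun i => by simp⟩

namespace MvPolynomial

open Matrix

variable {K : Type*} [Field K] {σ m n : Type*}

theorem eval_det [Fintype n] [DecidableEq n] (x : σ → K) (M : Matrix n n (MvPolynomial σ K)) :
    eval x M.det = (M.map (eval x)).det :=
  RingHom.map_det _ _

theorem exists_matrix_map_eval_eq [Fintype σ] (L : (σ → K) →ᵃ[K] Matrix m n K) :
    ∃ A : Matrix m n (MvPolynomial σ K), ∀ x, A.map (eval x) = L x := by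
  classical
  refine ⟨.of fun i j => ∑ c, C (L.linear (fun c' => if c = c' then 1 else 0) i j) * X c +
    C (L 0 i j), fun x => ?_⟩
  ext i j
  rw [congrFun L.decomp x, Pi.add_apply, LinearMap.pi_apply_eq_sum_univ L.linear x]
  simp [Matrix.sum_apply, mul_comm]

/-- `u` is the vector of signed maximal minors of rows of `A` that are independent at `x₀`, and
`p` is one of these minors. -/
theorem exists_ker_le_span_eval [Fintype m] [Fintype n] (A : Matrix m n (MvPolynomial σ K))
    {x₀ : σ → K} (hx₀ : (A.map (eval x₀)).rank + 1 = Fintype.card n) :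
    ∃ (p : MvPolynomial σ K) (u : n → MvPolynomial σ K), eval x₀ p ≠ 0 ∧
      ∀ x, eval x p ≠ 0 →
        LinearMap.ker (A.map (eval x)).mulVecLin ≤ K ∙ fun j => eval x (u j) := by
  obtain ⟨r, c, hrc⟩ := (A.map (eval x₀)).exists_submatrix_det_ne_zero le_rfl
  have hc : Function.Injective c := fun i j hij => by_contra fun hne =>
    hrc (det_zero_of_column_eq hne fun _ => by simp [hij])
  obtain ⟨e, he⟩ := Fin.exists_equiv_castSucc_eq hc hx₀.symm
  set A' := A.submatrix r e
  have hA' : A'.submatrix id Fin.castSucc = A.submatrix r c := by ext; simp [A', he]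
  refine ⟨(A.submatrix r c).det, A'.maxMinors ∘ e.symm, ?_, fun x hx w hw => ?_⟩
  · rwa [MvPolynomial.eval_det, ← submatrix_map]
  · rw [← hA', MvPolynomial.eval_det, ← submatrix_map] at hx
    have hker := (A'.map (eval x)).ker_mulVecLin_eq_span_maxMinors hx
    have hwe : w ∘ e ∈ LinearMap.ker (A'.map (eval x)).mulVecLin := by
      have hw : A.map (eval x) *ᵥ w = 0 := hw
      rw [LinearMap.mem_ker, mulVecLin_apply, ← submatrix_map, submatrix_mulVec_equiv]
      simp [Function.comp_assoc, hw]
    rw [hker, maxMinors_map, mem_span_singleton] at hwe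
    obtain ⟨a, ha⟩ := hwe
    exact mem_span_singleton.mpr ⟨a, by ext j; simpa using congrFun ha (e.symm j)⟩

end MvPolynomial

theorem Submodule.exists_smul_eq_of_le_span_singleton {K V : Type*} [Field K] [AddCommGroup V]
    [Module K V] {W : Submodule K V} {v w : V} (hW : W ≤ K ∙ v) (hw : w ∈ W) (hw0 : w ≠ 0) :
    ∃ c : K, c ≠ 0 ∧ v = c • w := by
  obtain ⟨a, rfl⟩ := mem_span_singleton.mp (hW hw)
  have ha : a ≠ 0 := by rintro rfl; exact hw0 (zero_smul K v)
  exact ⟨a⁻¹, inv_ne_zero ha, by rw [smul_smul, inv_mul_cancel₀ ha, one_smul]⟩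

theorem IsIrreducible.inter_biInter_nonempty {X ι : Type*} [TopologicalSpace X] {Z : Set X}
    (hZ : IsIrreducible Z) {S : Set ι} (hS : S.Finite) {U : ι → Set X}
    (hU : ∀ i ∈ S, IsOpen (U i)) (hZU : ∀ i ∈ S, (Z ∩ U i).Nonempty) :
    (Z ∩ ⋂ i ∈ S, U i).Nonempty := by
  classical
  simpa [Set.sInter_image] using
    isIrreducible_iff_sInter.mp hZ (hS.toFinset.image U) (by simpa using hU) (by simpa using hZU)

def blockCoords (R : Type*) [Semiring R] {ι : Type*} (m n : ι → ℕ) :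
    (∀ a, Matrix (Fin (m a)) (Fin (n a)) R) ≃ₗ[R] ((Σ a, Fin (m a) × Fin (n a)) → R) where
  toFun M x := M x.1 x.2.1 x.2.2
  invFun w a := .of fun p q => w ⟨a, p, q⟩
  map_add' _ _ := rfl
  map_smul' _ _ := rfl
  left_inv _ := rfl
  right_inv _ := rfl

namespace RepScheme

open Module Submodule Matrix MvPolynomial

variable {K : Type} [Field K] {Q0 Q1 : Type} {s t : Q1 → Q0}
  {rel : ∀ i j : Q0, Set (QPath Q0 Q1 s t i j →₀ K)}

instance (d : Q0 → ℕ) : AddCommGroup (Rep K Q0 Q1 s t d) :=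
  inferInstanceAs (AddCommGroup (∀ a, Matrix (Fin (d (t a))) (Fin (d (s a))) K))

instance (d : Q0 → ℕ) : Module K (Rep K Q0 Q1 s t d) :=
  inferInstanceAs (Module K (∀ a, Matrix (Fin (d (t a))) (Fin (d (s a))) K))

@[simp]
theorem Rep.add_apply {d : Q0 → ℕ} (M N : Rep K Q0 Q1 s t d) (a : Q1) : (M + N) a = M a + N a :=
  rfl

@[simp]
theorem Rep.smul_apply {d : Q0 → ℕ} (c : K) (M : Rep K Q0 Q1 s t d) (a : Q1) :
    (c • M) a = c • M a :=
  rfl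

abbrev Coord (s t : Q1 → Q0) (d : Q0 → ℕ) : Type := Σ a : Q1, Fin (d (t a)) × Fin (d (s a))

abbrev coords (d : Q0 → ℕ) : Rep K Q0 Q1 s t d ≃ₗ[K] (Coord s t d → K) :=
  blockCoords K (fun a => d (t a)) (fun a => d (s a))

theorem isOpen_setOf_eval_ne_zero {d : Q0 → ℕ} (p : MvPolynomial (Coord s t d) K) :
    IsOpen {M : Rep K Q0 Q1 s t d | eval (coords d M) p ≠ 0} :=
  isOpen_induced (t := zariskiTopology K _)
    (TopologicalSpace.isOpen_generateFrom_of_mem ⟨p, rfl⟩)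

theorem isOpen_setOf_le_rank {d : Q0 → ℕ} {m n : Type*} [Fintype m] [Fintype n]
    (A : Matrix m n (MvPolynomial (Coord s t d) K)) (k : ℕ) :
    IsOpen {M : Rep K Q0 Q1 s t d | k ≤ (A.map (eval (coords d M))).rank} := by
  simp_rw [le_rank_iff_exists_submatrix_det_ne_zero, Set.ofPred_exists]
  refine isOpen_iUnion fun r => isOpen_iUnion fun c => ?_
  simpa only [MvPolynomial.eval_det, submatrix_map] using
    isOpen_setOf_eval_ne_zero (A.submatrix r c).det

abbrev HomSpace (K : Type) {Q0 : Type} (u v : Q0 → ℕ) : Type :=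
  ∀ i : Q0, Matrix (Fin (v i)) (Fin (u i)) K

theorem mem_repHom {u v : Q0 → ℕ} {M : Rep K Q0 Q1 s t u} {N : Rep K Q0 Q1 s t v}
    {f : HomSpace K u v} : f ∈ RepHom K Q0 Q1 s t M N ↔ ∀ a, f (t a) * M a = N a * f (s a) :=
  Iff.rfl

theorem one_mem_repHom {d : Q0 → ℕ} (M : Rep K Q0 Q1 s t d) :
    (1 : HomSpace K d d) ∈ RepHom K Q0 Q1 s t M M := fun a => by
  simp only [Pi.one_apply, Matrix.one_mul, Matrix.mul_one]

theorem one_ne_zero_of_finrank_eq_one {d : Q0 → ℕ} {W : Submodule K (HomSpace K d d)}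
    (hW : finrank K W = 1) : (1 : HomSpace K d d) ≠ 0 := fun h => by
  have : Subsingleton (HomSpace K d d) := subsingleton_of_zero_eq_one h.symm
  rw [finrank_zero_of_subsingleton] at hW
  exact zero_ne_one hW

theorem IsBrick.repHom_ne_bot {d : Q0 → ℕ} {M : Rep K Q0 Q1 s t d} (h : IsBrick K Q0 Q1 s t M) :
    RepHom K Q0 Q1 s t M M ≠ ⊥ := fun h0 => by
  rw [IsBrick, h0, finrank_bot] at h
  exact zero_ne_one h

theorem IsSemibrick.insert {S : Set (ModPt K Q0 Q1 s t rel)} (hS : IsSemibrick K Q0 Q1 s t rel S)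
    {X : ModPt K Q0 Q1 s t rel} (hX : IsBrick K Q0 Q1 s t X.2.1)
    (horth : ∀ N ∈ S,
      RepHom K Q0 Q1 s t X.2.1 N.2.1 = ⊥ ∧ RepHom K Q0 Q1 s t N.2.1 X.2.1 = ⊥) :
    IsSemibrick K Q0 Q1 s t rel (insert X S) := by
  refine ⟨Set.forall_mem_insert.mpr ⟨hX, hS.1⟩, ?_⟩
  rintro N (rfl | hN) N' (rfl | hN') hne
  · exact absurd rfl hne
  · exact (horth N' hN').1
  · exact (horth N hN).2
  · exact hS.2 N hN N' hN' hne

/-- Linear in the pair `(M, N)`, so that its kernel `Hom(M, N)` varies polynomially with `M`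
and `N`. -/
def homDefect (u v : Q0 → ℕ) : Rep K Q0 Q1 s t u × Rep K Q0 Q1 s t v →ₗ[K]
    HomSpace K u v →ₗ[K] (∀ a : Q1, Matrix (Fin (v (t a))) (Fin (u (s a))) K) :=
  LinearMap.mk₂ K (fun MN f a => f (t a) * MN.1 a - MN.2 a * f (s a))
    (fun _ _ _ => by ext1; simp only [Prod.fst_add, Prod.snd_add, Rep.add_apply, Matrix.mul_add,
      Matrix.add_mul, Pi.add_apply]; abel)
    (fun _ _ _ => by ext1; simp [smul_sub])
    (fun _ _ _ => by ext1; simp only [Pi.add_apply, Matrix.mul_add, Matrix.add_mul]; abel)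
    (fun _ _ _ => by ext1; simp [smul_sub])

theorem repHom_eq_ker {u v : Q0 → ℕ} (M : Rep K Q0 Q1 s t u) (N : Rep K Q0 Q1 s t v) :
    RepHom K Q0 Q1 s t M N = LinearMap.ker (homDefect u v (M, N)) := by
  ext f
  simp [mem_repHom, homDefect, funext_iff, sub_eq_zero]

theorem self_mem_orbit {d : Q0 → ℕ} (B : RepMod K Q0 Q1 s t rel d) :
    B ∈ orbit K Q0 Q1 s t rel B :=
  ⟨fun _ => 1, fun a => by simp⟩

theorem mem_orbit_of_mem_repHom_of_isUnit {d : Q0 → ℕ} {B X : RepMod K Q0 Q1 s t rel d}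
    {f : HomSpace K d d} (hf : f ∈ RepHom K Q0 Q1 s t B.1 X.1) (hu : ∀ i, IsUnit (f i)) :
    X ∈ orbit K Q0 Q1 s t rel B := by
  refine ⟨fun i => (hu i).unit, fun a => ?_⟩
  rw [IsUnit.unit_spec, mem_repHom.mp hf a, Matrix.mul_assoc, (hu (s a)).mul_val_inv,
    Matrix.mul_one]

theorem mem_orbit_of_mem_repHom_of_isUnit' {d : Q0 → ℕ} {B X : RepMod K Q0 Q1 s t rel d}
    {f : HomSpace K d d} (hf : f ∈ RepHom K Q0 Q1 s t X.1 B.1) (hu : ∀ i, IsUnit (f i)) :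
    X ∈ orbit K Q0 Q1 s t rel B := by
  refine ⟨fun i => (hu i).unit⁻¹, fun a => ?_⟩
  rw [inv_inv, IsUnit.unit_spec, Matrix.mul_assoc, ← mem_repHom.mp hf a, ← Matrix.mul_assoc,
    (hu (t a)).val_inv_mul, Matrix.one_mul]

variable [Fintype Q0]

theorem isBrick_of_finrank_le_one {d : Q0 → ℕ} {M : Rep K Q0 Q1 s t d}
    (h : finrank K (RepHom K Q0 Q1 s t M M) ≤ 1) (h1 : (1 : HomSpace K d d) ≠ 0) :
    IsBrick K Q0 Q1 s t M := by
  refine le_antisymm h (Nat.one_le_iff_ne_zero.mpr fun h0 => h1 ?_)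
  simpa [Submodule.finrank_eq_zero.mp h0] using one_mem_repHom (K := K) M

variable [Fintype Q1]

theorem exists_matrix_repHom_eq_comap_ker {d u v : Q0 → ℕ}
    (g : Rep K Q0 Q1 s t d →ᵃ[K] Rep K Q0 Q1 s t u × Rep K Q0 Q1 s t v) :
    ∃ A : Matrix (Σ a : Q1, Fin (v (t a)) × Fin (u (s a))) (Σ i : Q0, Fin (v i) × Fin (u i))
        (MvPolynomial (Coord s t d) K), ∀ M,
      RepHom K Q0 Q1 s t (g M).1 (g M).2 =
        (LinearMap.ker (A.map (eval (coords d M))).mulVecLin).comap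
          (blockCoords K v u).toLinearMap := by
  classical
  let toMatrix := ((blockCoords K v u).arrowCongr
    (blockCoords K (fun a => v (t a)) (fun a => u (s a)))).trans LinearMap.toMatrix'
  obtain ⟨A, hA⟩ := exists_matrix_map_eval_eq (toMatrix.toLinearMap.toAffineMap.comp
    ((homDefect u v).toAffineMap.comp (g.comp (coords d).symm.toLinearMap.toAffineMap)))
  refine ⟨A, fun M => ?_⟩
  ext f
  simp [repHom_eq_ker, hA, toMatrix, LinearMap.toMatrix'_mulVec]

theorem isOpen_setOf_finrank_repHom_le {d u v : Q0 → ℕ}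
    (g : Rep K Q0 Q1 s t d →ᵃ[K] Rep K Q0 Q1 s t u × Rep K Q0 Q1 s t v) (n : ℕ) :
    IsOpen {M | finrank K (RepHom K Q0 Q1 s t (g M).1 (g M).2) ≤ n} := by
  obtain ⟨A, hA⟩ := exists_matrix_repHom_eq_comap_ker g
  have key (M : Rep K Q0 Q1 s t d) : finrank K (RepHom K Q0 Q1 s t (g M).1 (g M).2) ≤ n ↔
      Fintype.card (Σ i : Q0, Fin (v i) × Fin (u i)) - n ≤
        (A.map (eval (coords d M))).rank := by
    have := (A.map (eval (coords d M))).rank_add_finrank_ker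
    rw [hA, comap_equiv_eq_map_symm, LinearEquiv.finrank_map_eq]
    omega
  simp_rw [key]
  exact isOpen_setOf_le_rank A _

theorem isOpen_setOf_repHom_eq_bot {d u v : Q0 → ℕ}
    (g : Rep K Q0 Q1 s t d →ᵃ[K] Rep K Q0 Q1 s t u × Rep K Q0 Q1 s t v) :
    IsOpen {M | RepHom K Q0 Q1 s t (g M).1 (g M).2 = ⊥} := by
  simpa only [Nat.le_zero, Submodule.finrank_eq_zero] using isOpen_setOf_finrank_repHom_le g 0

/-- At `B` the polynomial kernel vector of `MvPolynomial.exists_ker_le_span_eval` is a nonzero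
multiple of the identity, so its blocks stay invertible near `B`. -/
theorem exists_isOpen_forall_exists_isUnit_mem_repHom {d : Q0 → ℕ}
    (g : Rep K Q0 Q1 s t d →ᵃ[K] Rep K Q0 Q1 s t d × Rep K Q0 Q1 s t d) {B : Rep K Q0 Q1 s t d}
    (hB : finrank K (RepHom K Q0 Q1 s t (g B).1 (g B).2) = 1)
    (h1 : (1 : HomSpace K d d) ∈ RepHom K Q0 Q1 s t (g B).1 (g B).2) :
    ∃ U : Set (Rep K Q0 Q1 s t d), IsOpen U ∧ B ∈ U ∧ ∀ M ∈ U,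
      RepHom K Q0 Q1 s t (g M).1 (g M).2 ≠ ⊥ →
      ∃ f ∈ RepHom K Q0 Q1 s t (g M).1 (g M).2, ∀ i, IsUnit (f i) := by
  obtain ⟨A, hA⟩ := exists_matrix_repHom_eq_comap_ker g
  have hmem (M : Rep K Q0 Q1 s t d) (f : HomSpace K d d) :
      f ∈ RepHom K Q0 Q1 s t (g M).1 (g M).2 ↔
        blockCoords K d d f ∈ LinearMap.ker (A.map (eval (coords d M))).mulVecLin := by
    rw [hA]; rfl
  have hrank : (A.map (eval (coords d B))).rank + 1 =
      Fintype.card (Σ i : Q0, Fin (d i) × Fin (d i)) := by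
    have := (A.map (eval (coords d B))).rank_add_finrank_ker
    rw [hA, comap_equiv_eq_map_symm, LinearEquiv.finrank_map_eq] at hB
    omega
  obtain ⟨p, u, hpB, hu⟩ := exists_ker_le_span_eval A hrank
  let φ (M : Rep K Q0 Q1 s t d) : HomSpace K d d :=
    (blockCoords K d d).symm fun j => eval (coords d M) (u j)
  let D (i : Q0) : MvPolynomial (Coord s t d) K := (Matrix.of fun a b => u ⟨i, a, b⟩).det
  have hdet (M : Rep K Q0 Q1 s t d) (i : Q0) : (φ M i).det = eval (coords d M) (D i) := by
    rw [MvPolynomial.eval_det]; rfl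
  refine ⟨{M | eval (coords d M) p ≠ 0} ∩ ⋂ i, {M | eval (coords d M) (D i) ≠ 0},
    (isOpen_setOf_eval_ne_zero p).inter
      (isOpen_iInter_of_finite fun i => isOpen_setOf_eval_ne_zero _),
    ⟨hpB, Set.mem_iInter.mpr fun i => ?_⟩, fun M ⟨hpM, hDM⟩ hM => ?_⟩
  · obtain ⟨c, hc, hcu⟩ := exists_smul_eq_of_le_span_singleton (hu (coords d B) hpB)
      ((hmem B 1).mp h1) (by simpa using one_ne_zero_of_finrank_eq_one hB)
    have hφ : φ B = c • 1 := by simp [φ, hcu]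
    rw [Set.mem_ofPred_eq, ← hdet, hφ, Pi.smul_apply, det_smul, Pi.one_apply, det_one, mul_one]
    exact pow_ne_zero _ hc
  · obtain ⟨w, hw, hw0⟩ := (Submodule.ne_bot_iff _).mp hM
    obtain ⟨c, -, hcu⟩ := exists_smul_eq_of_le_span_singleton (hu (coords d M) hpM)
      ((hmem M w).mp hw) (by simpa using hw0)
    refine ⟨φ M, (hmem M _).mpr ?_, fun i => ?_⟩
    · simpa [φ, hcu] using Submodule.smul_mem _ c ((hmem M w).mp hw)
    · rw [isUnit_iff_isUnit_det, hdet, isUnit_iff_ne_zero]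
      exact Set.mem_iInter.mp hDM i

/-- Otherwise a nonempty open subset of `Z`, which is dense in `Z`, would lie in the orbit
of `B`. -/
theorem exists_repHom_eq_bot_of_not_subset_closure_orbit {d : Q0 → ℕ}
    (g : Rep K Q0 Q1 s t d →ᵃ[K] Rep K Q0 Q1 s t d × Rep K Q0 Q1 s t d)
    {Z : Set (RepMod K Q0 Q1 s t rel d)} (hZ : IsPreirreducible Z) {B : RepMod K Q0 Q1 s t rel d}
    (hBZ : B ∈ Z) (hB : finrank K (RepHom K Q0 Q1 s t (g B.1).1 (g B.1).2) = 1)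
    (h1 : (1 : HomSpace K d d) ∈ RepHom K Q0 Q1 s t (g B.1).1 (g B.1).2)
    (horbit : ∀ X : RepMod K Q0 Q1 s t rel d, ∀ f ∈ RepHom K Q0 Q1 s t (g X.1).1 (g X.1).2,
      (∀ i, IsUnit (f i)) → X ∈ orbit K Q0 Q1 s t rel B)
    (hZB : ¬ Z ⊆ closure (orbit K Q0 Q1 s t rel B)) :
    ∃ X ∈ Z, RepHom K Q0 Q1 s t (g X.1).1 (g X.1).2 = ⊥ := by
  by_contra! h
  obtain ⟨U, hU, hBU, hiso⟩ := exists_isOpen_forall_exists_isUnit_mem_repHom g hB h1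
  refine hZB ((subset_closure_inter_of_isPreirreducible_of_isOpen hZ
    (hU.preimage continuous_subtype_val) ⟨B, hBZ, hBU⟩).trans (closure_mono ?_))
  rintro X ⟨hXZ, hXU⟩
  obtain ⟨f, hf, hfu⟩ := hiso X.1 hXU (h X hXZ)
  exact horbit X f hf hfu

theorem exists_repHom_eq_bot_of_closure_orbit_ssubset {d : Q0 → ℕ}
    {Z : Set (RepMod K Q0 Q1 s t rel d)} (hZ : IsPreirreducible Z) {B : RepMod K Q0 Q1 s t rel d}
    (hB : IsBrick K Q0 Q1 s t B.1) (hss : closure (orbit K Q0 Q1 s t rel B) ⊂ Z) :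
    (∃ X ∈ Z, RepHom K Q0 Q1 s t B.1 X.1 = ⊥) ∧
      ∃ X ∈ Z, RepHom K Q0 Q1 s t X.1 B.1 = ⊥ := by
  have hBZ : B ∈ Z := hss.1 (subset_closure (self_mem_orbit B))
  exact ⟨exists_repHom_eq_bot_of_not_subset_closure_orbit
      ((AffineMap.const K _ B.1).prod (AffineMap.id K _)) hZ hBZ hB (one_mem_repHom _)
      (fun _ _ hf hu => mem_orbit_of_mem_repHom_of_isUnit hf hu) hss.2,
    exists_repHom_eq_bot_of_not_subset_closure_orbit
      ((AffineMap.id K _).prod (AffineMap.const K _ B.1)) hZ hBZ hB (one_mem_repHom _)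
      (fun _ _ hf hu => mem_orbit_of_mem_repHom_of_isUnit' hf hu) hss.2⟩

theorem exists_isBrick_forall_repHom_eq_bot {S : Set (ModPt K Q0 Q1 s t rel)}
    (hsb : IsSemibrick K Q0 Q1 s t rel S) (hfin : S.Finite) {d : Q0 → ℕ}
    {B : RepMod K Q0 Q1 s t rel d} (hB : ⟨d, B⟩ ∈ S) {Z : Set (RepMod K Q0 Q1 s t rel d)}
    (hZ : IsIrreducible Z) (hss : closure (orbit K Q0 Q1 s t rel B) ⊂ Z) :
    ∃ X ∈ Z, IsBrick K Q0 Q1 s t X.1 ∧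
      ∀ N ∈ S, RepHom K Q0 Q1 s t X.1 N.2.1 = ⊥ ∧ RepHom K Q0 Q1 s t N.2.1 X.1 = ⊥ := by
  have hbrick : IsBrick K Q0 Q1 s t B.1 := hsb.1 _ hB
  have hBZ : B ∈ Z := hss.1 (subset_closure (self_mem_orbit B))
  obtain ⟨⟨X₁, hX₁Z, hX₁⟩, X₂, hX₂Z, hX₂⟩ :=
    exists_repHom_eq_bot_of_closure_orbit_ssubset hZ.2 hbrick hss
  let Oto (N : ModPt K Q0 Q1 s t rel) : Set (RepMod K Q0 Q1 s t rel d) :=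
    {X | RepHom K Q0 Q1 s t X.1 N.2.1 = ⊥}
  let Ofrom (N : ModPt K Q0 Q1 s t rel) : Set (RepMod K Q0 Q1 s t rel d) :=
    {X | RepHom K Q0 Q1 s t N.2.1 X.1 = ⊥}
  let Oend : Set (RepMod K Q0 Q1 s t rel d) := {X | finrank K (RepHom K Q0 Q1 s t X.1 X.1) ≤ 1}
  have hOto (N : ModPt K Q0 Q1 s t rel) : IsOpen (Oto N) :=
    (isOpen_setOf_repHom_eq_bot ((AffineMap.id K _).prod (AffineMap.const K _ N.2.1))).preimage
      continuous_subtype_val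
  have hOfrom (N : ModPt K Q0 Q1 s t rel) : IsOpen (Ofrom N) :=
    (isOpen_setOf_repHom_eq_bot ((AffineMap.const K _ N.2.1).prod (AffineMap.id K _))).preimage
      continuous_subtype_val
  have hOend : IsOpen Oend :=
    (isOpen_setOf_finrank_repHom_le ((AffineMap.id K _).prod (AffineMap.id K _)) 1).preimage
      continuous_subtype_val
  have hZto (N) (hN : N ∈ S) : (Z ∩ Oto N).Nonempty := by
    by_cases hNB : N = ⟨d, B⟩
    · subst hNB; exact ⟨X₂, hX₂Z, hX₂⟩
    · exact ⟨B, hBZ, hsb.2 _ hB N hN (Ne.symm hNB)⟩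
  have hZfrom (N) (hN : N ∈ S) : (Z ∩ Ofrom N).Nonempty := by
    by_cases hNB : N = ⟨d, B⟩
    · subst hNB; exact ⟨X₁, hX₁Z, hX₁⟩
    · exact ⟨B, hBZ, hsb.2 N hN _ hB hNB⟩
  have hOto' := hfin.isOpen_biInter fun N _ => hOto N
  have hOfrom' := hfin.isOpen_biInter fun N _ => hOfrom N
  obtain ⟨X, hXZ, ⟨hXto, hXfrom⟩, hXend⟩ := hZ.2 _ _ (hOto'.inter hOfrom') hOend
    (hZ.2 _ _ hOto' hOfrom' (hZ.inter_biInter_nonempty hfin (fun N _ => hOto N) hZto)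
      (hZ.inter_biInter_nonempty hfin (fun N _ => hOfrom N) hZfrom))
    ⟨B, hBZ, hbrick.le⟩
  exact ⟨X, hXZ, isBrick_of_finrank_le_one hXend (one_ne_zero_of_finrank_eq_one hbrick),
    fun N hN => ⟨Set.mem_iInter₂.mp hXto N hN, Set.mem_iInter₂.mp hXfrom N hN⟩⟩

end RepScheme

theorem RepScheme.semibrick_extension_general
    (K : Type) [Field K]
    (Q0 Q1 : Type) [Fintype Q0] [Fintype Q1] (s t : Q1 → Q0)
    (rel : ∀ i j : Q0, Set (QPath Q0 Q1 s t i j →₀ K))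
    (S : Set (ModPt K Q0 Q1 s t rel))
    (hsb : IsSemibrick K Q0 Q1 s t rel S)
    (hfin : S.Finite)
    (B : ModPt K Q0 Q1 s t rel) (hB : B ∈ S)
    (Z : Set (RepMod K Q0 Q1 s t rel B.1))
    (hZ : Z ∈ irreducibleComponents (RepMod K Q0 Q1 s t rel B.1))
    (hss : closure (orbit K Q0 Q1 s t rel B.2) ⊂ Z) :
    ∃ B' : RepMod K Q0 Q1 s t rel B.1, B' ∈ Z ∧
      (⟨B.1, B'⟩ : ModPt K Q0 Q1 s t rel) ∉ S ∧
      IsSemibrick K Q0 Q1 s t rel (insert ⟨B.1, B'⟩ S) := by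
  obtain ⟨d, B⟩ := B
  obtain ⟨X, hXZ, hX, horth⟩ := exists_isBrick_forall_repHom_eq_bot hsb hfin hB hZ.1 hss
  exact ⟨X, hXZ, fun hXS => hX.repHom_ne_bot (horth _ hXS).1, hsb.insert hX horth⟩

/-- **Theorem (extension theorem of semibricks, Thm 1.2).** Let `Λ = KQ/I` be a finite
dimensional algebra over an algebraically closed field `K` and `S` a finite semibrick.
If `B ∈ S` and an irreducible component `Z ∈ Irr(Λ)` satisfy that the orbit closure of `B`
is properly contained in `Z`, then there is a brick `B' ∈ Z` with `S ⊔ {B'}` a semibrick. -/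
theorem RepScheme.semibrick_extension
    (K : Type) [Field K] [IsAlgClosed K]
    (Q0 Q1 : Type) [Fintype Q0] [Fintype Q1] (s t : Q1 → Q0)
    (rel : ∀ i j : Q0, Set (QPath Q0 Q1 s t i j →₀ K))
    (hadm : IsAdmissible K Q0 Q1 s t rel)
    (S : Set (ModPt K Q0 Q1 s t rel))
    (hsb : IsSemibrick K Q0 Q1 s t rel S)
    (hfin : S.Finite)
    (B : ModPt K Q0 Q1 s t rel) (hB : B ∈ S)
    (Z : Set (RepMod K Q0 Q1 s t rel B.1))
    (hZ : Z ∈ irreducibleComponents (RepMod K Q0 Q1 s t rel B.1))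
    (hss : closure (orbit K Q0 Q1 s t rel B.2) ⊂ Z) :
    ∃ B' : RepMod K Q0 Q1 s t rel B.1, B' ∈ Z ∧
      (⟨B.1, B'⟩ : ModPt K Q0 Q1 s t rel) ∉ S ∧
      IsSemibrick K Q0 Q1 s t rel (insert ⟨B.1, B'⟩ S) :=
  RepScheme.semibrick_extension_general K Q0 Q1 s t rel S hsb hfin B hB Z hZ hss
end

section
/- Let Λ = KQ be the path algebra of a finite acyclic quiver Q over an algebraically closed field K, and let B be a brick that is not exceptional (i.e., Ext^1_Λ(B,B) ≠ 0). Then there exists a finite dimensional Λ-module X with Hom_Λ(X,B) = 0 whose dimension vector is a positive integer multiple of the dimension vector of B. -/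
/-!
Common setup: representation schemes of a finite dimensional algebra `Λ = KQ/I`
(`Q` a finite quiver, `I` an admissible ideal), following the paper.
-/

namespace RepScheme

variable (K : Type) [Field K]
variable (Q0 Q1 : Type) [Fintype Q0] [Fintype Q1]
variable (s t : Q1 → Q0)

/-! ### Path algebras `Λ = KQ` of finite acyclic quivers -/

/-- The quiver `Q` is acyclic: every cycle is trivial. -/
def IsAcyclic : Prop :=
  ∀ (i : Q0) (p : QPath Q0 Q1 s t i i), p = QPath.nil i

/-- A finite dimensional module over the path algebra `Λ = KQ`, regarded as a point of
`rep(Q,d)` for its dimension vector `d`. -/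
def ModPtP : Type := Σ d : Q0 → ℕ, Rep K Q0 Q1 s t d

/-- A set of `KQ`-modules is a semibrick if its elements are bricks and there are no
nonzero homomorphisms between distinct elements. -/
def IsSemibrickP (S : Set (ModPtP K Q0 Q1 s t)) : Prop :=
  (∀ B ∈ S, IsBrick K Q0 Q1 s t B.2) ∧
  ∀ B ∈ S, ∀ B' ∈ S, B ≠ B' → RepHom K Q0 Q1 s t B.2 B'.2 = ⊥

/-- For representations of the (hereditary) path algebra `KQ`, the self-extension space
`Ext¹(M,N)` is the cokernel of this map; in particular `Ext¹(M,N) = 0` iff it is surjective. -/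
def extMap {d c : Q0 → ℕ} (M : Rep K Q0 Q1 s t d) (N : Rep K Q0 Q1 s t c) :
    (∀ i : Q0, Matrix (Fin (c i)) (Fin (d i)) K) →ₗ[K]
      (∀ a : Q1, Matrix (Fin (c (t a))) (Fin (d (s a))) K) where
  toFun f := fun a => f (t a) * M a - N a * f (s a)
  map_add' f g := by
    funext a
    simp only [Pi.add_apply, Matrix.add_mul, Matrix.mul_add]
    abel
  map_smul' k f := by
    funext a
    simp only [Pi.smul_apply, Matrix.smul_mul, Matrix.mul_smul, smul_sub, RingHom.id_apply]

/-- A brick `B` over the path algebra is exceptional if `Ext¹(B,B) = 0`. -/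
def IsExceptional {d : Q0 → ℕ} (B : Rep K Q0 Q1 s t d) : Prop :=
  IsBrick K Q0 Q1 s t B ∧ Function.Surjective (extMap K Q0 Q1 s t B B)

end RepScheme

/-!
Choose `C` outside the image of `extMap B B`, i.e. a non-trivial first-order deformation
of `B`, and look at the line `B + t • C`. Over `K[X]` the generic point `B + X • C` has no
nonzero homomorphism to `B`: the lowest nonzero coefficient of such a homomorphism is an
endomorphism of the brick `B`, hence a nonzero scalar `c`, and the next coefficient then puts
`c • C` into the image of `extMap B B`. Injectivity of the pencil `f ↦ f (B + X • C) - B f`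
over `K[X]` passes to `K(X)`, where it has a left inverse; clearing its denominators gives a
single nonzero polynomial whose non-roots `t` are points with `Hom(B + t • C, B) = 0`. Since `K`
is infinite such a `t` exists, and `B + t • C` has dimension vector `dim B`.
-/

open Polynomial

namespace Matrix

variable {m n : Type*} [Fintype n]

theorem coeff_map_C_mulVec {R : Type*} [Semiring R] (A : Matrix m n R) (g : n → R[X])
    (k : ℕ) : (fun i => ((A.map C *ᵥ g) i).coeff k) = A *ᵥ fun j => (g j).coeff k := by
  ext i
  simp [mulVec, dotProduct, coeff_C_mul]

theorem eq_zero_of_map_C_add_X_smul_mulVec_eq_zero {R : Type*} [Ring R] (A D : Matrix m n R)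
    (hAD : ∀ v, A *ᵥ v = 0 → (∃ w, A *ᵥ w = D *ᵥ v) → v = 0)
    {g : n → R[X]} (hg : (A.map C + (X : R[X]) • D.map C) *ᵥ g = 0) : g = 0 := by
  classical
  set c : ℕ → n → R := fun k j => (g j).coeff k
  have hsplit : ∀ k, (fun i => (((A.map C + (X : R[X]) • D.map C) *ᵥ g) i).coeff k) =
      A *ᵥ c k + fun i => (X * (D.map C *ᵥ g) i).coeff k := by
    intro k
    rw [add_mulVec, smul_mulVec, ← coeff_map_C_mulVec]
    rfl
  have hcoeff_zero : A *ᵥ c 0 = 0 := by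
    simpa [hg, coeff_X_mul_zero] using (hsplit 0).symm
  have hcoeff_succ : ∀ k, A *ᵥ c (k + 1) + D *ᵥ c k = 0 := by
    intro k
    have h := hsplit (k + 1)
    simp only [coeff_X_mul, coeff_map_C_mulVec, hg, Pi.zero_apply, coeff_zero] at h
    exact h.symm
  by_contra hg0
  have hex : ∃ k, c k ≠ 0 := by
    by_contra! h
    exact hg0 (funext fun j => Polynomial.ext fun k => congrFun (h k) j)
  have hker : A *ᵥ c (Nat.find hex) = 0 := by
    rcases hk : Nat.find hex with _ | k
    · exact hcoeff_zero
    · have hck : c k = 0 := not_not.mp (Nat.find_min hex (hk ▸ k.lt_succ_self))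
      simpa [hck] using hcoeff_succ k
  refine Nat.find_spec hex (hAD _ hker ⟨-c (Nat.find hex + 1), ?_⟩)
  rw [mulVec_neg, neg_eq_iff_add_eq_zero]
  exact hcoeff_succ _

theorem eq_zero_of_map_algebraMap_mulVec_eq_zero {R F : Type*} [CommRing R] [IsDomain R]
    [Field F] [Algebra R F] [IsFractionRing R F] (M : Matrix m n R)
    (hM : ∀ v, M *ᵥ v = 0 → v = 0) {v : n → F} (hv : M.map (algebraMap R F) *ᵥ v = 0) :
    v = 0 := by
  have hinj := IsFractionRing.injective R F
  obtain ⟨b, hb⟩ := IsLocalization.exist_integer_multiples_of_finite (nonZeroDivisors R) v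
  choose w hw using hb
  have hw0 : w = 0 := hM w <| funext fun i => hinj <| by
    rw [RingHom.map_mulVec, show algebraMap R F ∘ w = (b : R) • v from funext hw, mulVec_smul,
      hv, smul_zero, Pi.zero_apply, Pi.zero_apply, map_zero]
  have hb0 : algebraMap R F b ≠ 0 :=
    (map_ne_zero_iff _ hinj).mpr (nonZeroDivisors.ne_zero b.2)
  funext i
  have := hw i
  rw [hw0, Pi.zero_apply, map_zero, Algebra.smul_def] at this
  exact (mul_eq_zero.mp this.symm).resolve_left hb0

theorem exists_mul_eq_one_of_mulVec_eq_zero {K : Type*} [Field K] [Fintype m] [DecidableEq n]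
    (M : Matrix m n K) (hM : ∀ v, M *ᵥ v = 0 → v = 0) : ∃ P : Matrix n m K, P * M = 1 := by
  classical
  obtain ⟨P, hP⟩ :=
    LinearMap.exists_leftInverse_of_injective _ (ker_mulVecLin_eq_bot_iff.mpr hM)
  refine ⟨LinearMap.toMatrix' P, ?_⟩
  rw [← LinearMap.toMatrix'_toLin' M, ← LinearMap.toMatrix'_comp, Matrix.toLin'_apply', hP,
    LinearMap.toMatrix'_id]

theorem exists_mul_eq_smul_one {R : Type*} [CommRing R] [IsDomain R] [Fintype m] [DecidableEq n]
    (M : Matrix m n R) (hM : ∀ v, M *ᵥ v = 0 → v = 0) :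
    ∃ b ≠ (0 : R), ∃ P : Matrix n m R, P * M = b • 1 := by
  let F := FractionRing R
  obtain ⟨PF, hPF⟩ := exists_mul_eq_one_of_mulVec_eq_zero _
    fun _ => eq_zero_of_map_algebraMap_mulVec_eq_zero (F := F) M hM
  obtain ⟨b, hb⟩ := IsLocalization.exist_integer_multiples_of_finite (nonZeroDivisors R)
    fun p : n × m => PF p.1 p.2
  choose P hP using hb
  have hPmap : (of fun i j => P (i, j)).map (algebraMap R F) = (b : R) • PF := by
    ext i j
    exact hP (i, j)
  refine ⟨b, nonZeroDivisors.ne_zero b.2, of fun i j => P (i, j),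
    map_injective (IsFractionRing.injective R F) ?_⟩
  beta_reduce
  rw [Matrix.map_mul, hPmap, smul_mul, hPF, map_smul' _ _ _ (map_mul _),
    Matrix.map_one _ (map_zero _) (map_one _), algebraMap_smul]

theorem exists_eval_mulVec_eq_zero {R : Type*} [CommRing R] [IsDomain R] [Infinite R]
    [Fintype m] [DecidableEq n] (M : Matrix m n R[X]) (hM : ∀ v, M *ᵥ v = 0 → v = 0) :
    ∃ t : R, ∀ v, M.map (evalRingHom t) *ᵥ v = 0 → v = 0 := by
  obtain ⟨b, hb, P, hP⟩ := exists_mul_eq_smul_one M hM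
  obtain ⟨t, ht⟩ : ∃ t, b.eval t ≠ 0 := by
    by_contra! h
    exact hb (Polynomial.funext fun t => by simp [h t])
  refine ⟨t, fun v hv => ?_⟩
  have hPM : P.map (evalRingHom t) * M.map (evalRingHom t) = b.eval t • 1 := by
    rw [← Matrix.map_mul, hP, map_smul' _ _ _ (map_mul _),
      Matrix.map_one _ (map_zero _) (map_one _), coe_evalRingHom]
  have := congrArg (P.map (evalRingHom t) *ᵥ ·) hv
  simp only [mulVec_mulVec, hPM, smul_mulVec, one_mulVec, mulVec_zero] at this
  exact (smul_eq_zero.mp this).resolve_left ht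

theorem exists_eq_zero_of_add_smul_mulVec_eq_zero {R : Type*} [CommRing R] [IsDomain R]
    [Infinite R] [Fintype m] [DecidableEq n] (A D : Matrix m n R)
    (hAD : ∀ v, A *ᵥ v = 0 → (∃ w, A *ᵥ w = D *ᵥ v) → v = 0) :
    ∃ t : R, ∀ v, (A + t • D) *ᵥ v = 0 → v = 0 := by
  obtain ⟨t, ht⟩ := exists_eval_mulVec_eq_zero _
    fun _ => eq_zero_of_map_C_add_X_smul_mulVec_eq_zero A D hAD
  refine ⟨t, ?_⟩
  convert ht using 4
  ext i j
  simp only [map_apply, add_apply, smul_apply, smul_eq_mul, coe_evalRingHom, eval_add, eval_mul,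
    eval_X, eval_C]

end Matrix

open Matrix

namespace LinearMap

theorem toMatrix_mulVec {R V W ι κ : Type*} [CommRing R] [AddCommGroup V] [Module R V]
    [AddCommGroup W] [Module R W] [Fintype ι] [Fintype κ] [DecidableEq ι]
    (bV : Module.Basis ι R V) (bW : Module.Basis κ R W) (f : V →ₗ[R] W) (v : ι → R) :
    toMatrix bV bW f *ᵥ v = bW.equivFun (f (bV.equivFun.symm v)) := by
  have := toMatrix_mulVec_repr bV bW f (bV.equivFun.symm v)
  rwa [← Module.Basis.equivFun_apply, ← Module.Basis.equivFun_apply,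
    LinearEquiv.apply_symm_apply] at this

theorem exists_ker_add_smul_eq_bot {K V W : Type*} [Field K] [Infinite K] [AddCommGroup V]
    [Module K V] [FiniteDimensional K V] [AddCommGroup W] [Module K W] [FiniteDimensional K W]
    (A D : V →ₗ[K] W) (hAD : ker A ⊓ (range A).comap D = ⊥) :
    ∃ t : K, ker (A + t • D) = ⊥ := by
  let bV := Module.finBasis K V
  let bW := Module.finBasis K W
  obtain ⟨t, ht⟩ := Matrix.exists_eq_zero_of_add_smul_mulVec_eq_zero
    (toMatrix bV bW A) (toMatrix bV bW D) fun v hA ⟨w, hw⟩ => by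
      rw [toMatrix_mulVec, LinearEquiv.map_eq_zero_iff] at hA
      rw [toMatrix_mulVec, toMatrix_mulVec, bW.equivFun.injective.eq_iff] at hw
      exact bV.equivFun.symm.map_eq_zero_iff.mp <| (Submodule.eq_bot_iff _).mp hAD _ ⟨hA, _, hw⟩
  refine ⟨t, ker_eq_bot'.mpr fun x hx => ?_⟩
  have := ht (bV.equivFun x) (by
    rw [← map_smul, ← map_add, toMatrix_mulVec, LinearEquiv.symm_apply_apply, hx, map_zero])
  simpa using this

end LinearMap

namespace RepScheme

variable {K : Type} [Field K] {Q0 Q1 : Type} {s t : Q1 → Q0} {d : Q0 → ℕ}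

theorem repHom_eq_ker_extMap {c : Q0 → ℕ} (M : Rep K Q0 Q1 s t d) (N : Rep K Q0 Q1 s t c) :
    RepHom K Q0 Q1 s t M N = LinearMap.ker (extMap K Q0 Q1 s t M N) := by
  ext f
  simp [RepHom, extMap, funext_iff, sub_eq_zero]

theorem extMap_add_smul (M N C : Rep K Q0 Q1 s t d) (c : K) :
    extMap K Q0 Q1 s t (fun a => M a + c • C a) N =
      extMap K Q0 Q1 s t M N + c • extMap K Q0 Q1 s t C (fun _ => 0) := by
  ext f a : 2
  simp only [extMap, LinearMap.coe_mk, AddHom.coe_mk, LinearMap.add_apply, LinearMap.smul_apply,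
    Pi.add_apply, Pi.smul_apply, Matrix.mul_add, Matrix.mul_smul, Matrix.zero_mul, sub_zero]
  abel

theorem extMap_zero_one (C : ∀ a, Matrix (Fin (d (t a))) (Fin (d (s a))) K) :
    extMap K Q0 Q1 s t C (fun _ => 0) 1 = C := by
  ext a : 1
  simp [extMap]

theorem IsBrick.eq_smul_one {B : Rep K Q0 Q1 s t d} (hB : IsBrick K Q0 Q1 s t B)
    {f : ∀ i, Matrix (Fin (d i)) (Fin (d i)) K} (hf : f ∈ RepHom K Q0 Q1 s t B B) :
    ∃ c : K, f = c • 1 := by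
  by_cases h1 : (1 : ∀ i, Matrix (Fin (d i)) (Fin (d i)) K) = 0
  · exact ⟨0, by rw [zero_smul, ← mul_one f, h1, mul_zero]⟩
  have h1mem : (1 : ∀ i, Matrix (Fin (d i)) (Fin (d i)) K) ∈ RepHom K Q0 Q1 s t B B :=
    fun a => by simp
  obtain ⟨c, hc⟩ :=
    (finrank_eq_one_iff_of_nonzero' ⟨1, h1mem⟩ (by simpa using h1)).mp hB ⟨f, hf⟩
  exact ⟨c, congrArg Subtype.val hc.symm⟩

theorem IsBrick.ker_extMap_inf_comap_range_eq_bot {B : Rep K Q0 Q1 s t d}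
    {C : ∀ a, Matrix (Fin (d (t a))) (Fin (d (s a))) K} (hB : IsBrick K Q0 Q1 s t B)
    (hC : C ∉ LinearMap.range (extMap K Q0 Q1 s t B B)) :
    LinearMap.ker (extMap K Q0 Q1 s t B B) ⊓
      (LinearMap.range (extMap K Q0 Q1 s t B B)).comap (extMap K Q0 Q1 s t C (fun _ => 0)) =
        ⊥ := by
  rw [Submodule.eq_bot_iff]
  rintro f ⟨hf, g, hg⟩
  obtain ⟨c, rfl⟩ := hB.eq_smul_one (by rwa [repHom_eq_ker_extMap])
  rcases eq_or_ne c 0 with rfl | hc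
  · exact zero_smul _ _
  refine absurd ⟨c⁻¹ • g, ?_⟩ hC
  rw [map_smul, hg, map_smul, extMap_zero_one]
  exact inv_smul_smul₀ hc C

theorem exists_repHom_eq_bot_of_not_surjective [Infinite K] [Fintype Q0] [Fintype Q1]
    {B : Rep K Q0 Q1 s t d} (hB : IsBrick K Q0 Q1 s t B)
    (hext : ¬ Function.Surjective (extMap K Q0 Q1 s t B B)) :
    ∃ X : Rep K Q0 Q1 s t d, RepHom K Q0 Q1 s t X B = ⊥ := by
  obtain ⟨C, hC⟩ : ∃ C, C ∉ LinearMap.range (extMap K Q0 Q1 s t B B) := by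
    simpa [Function.Surjective] using hext
  obtain ⟨c, hc⟩ :=
    LinearMap.exists_ker_add_smul_eq_bot _ _ (hB.ker_extMap_inf_comap_range_eq_bot hC)
  refine ⟨fun a => B a + c • C a, (repHom_eq_ker_extMap _ B).trans ?_⟩
  exact (congrArg LinearMap.ker (extMap_add_smul B B C c)).trans hc

end RepScheme

theorem RepScheme.exists_left_perp_module_multiple_dim_general
    (K : Type) [Field K] [IsAlgClosed K]
    (Q0 Q1 : Type) [Fintype Q0] [Fintype Q1] (s t : Q1 → Q0)
    (d : Q0 → ℕ) (B : Rep K Q0 Q1 s t d)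
    (hbrick : IsBrick K Q0 Q1 s t B)
    (hnotexc : ¬ Function.Surjective (extMap K Q0 Q1 s t B B)) :
    ∃ (l : ℕ), 1 ≤ l ∧ ∃ X : Rep K Q0 Q1 s t (fun i => l * d i),
      RepHom K Q0 Q1 s t X B = ⊥ := by
  obtain ⟨X, hX⟩ := exists_repHom_eq_bot_of_not_surjective hbrick hnotexc
  -- `fun i => 1 * d i` is not definitionally `d`, so `X` is transported along `one_mul`.
  have transport : ∀ d', d = d' → ∃ X : Rep K Q0 Q1 s t d', RepHom K Q0 Q1 s t X B = ⊥ := by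
    rintro _ rfl
    exact ⟨X, hX⟩
  exact ⟨1, le_rfl, transport _ (funext fun i => (one_mul (d i)).symm)⟩

/-- **Proposition 3.15 (1).** Let `Λ = KQ` with `Q` a finite acyclic quiver. If `B` is a
non-exceptional brick, then there exists `X ∈ ⊥B` (i.e. `Hom_Λ(X,B) = 0`) whose dimension
vector is a positive integer multiple of `dim B`. -/
theorem RepScheme.exists_left_perp_module_multiple_dim
    (K : Type) [Field K] [IsAlgClosed K]
    (Q0 Q1 : Type) [Fintype Q0] [Fintype Q1] (s t : Q1 → Q0)
    (hacyc : IsAcyclic Q0 Q1 s t)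
    (d : Q0 → ℕ) (B : Rep K Q0 Q1 s t d)
    (hbrick : IsBrick K Q0 Q1 s t B)
    (hnotexc : ¬ Function.Surjective (extMap K Q0 Q1 s t B B)) :
    ∃ (l : ℕ), 1 ≤ l ∧ ∃ X : Rep K Q0 Q1 s t (fun i => l * d i),
      RepHom K Q0 Q1 s t X B = ⊥ :=
  RepScheme.exists_left_perp_module_multiple_dim_general K Q0 Q1 s t d B hbrick hnotexc
end
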